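/- For all 1 ≤ n, m ≤ N, the commutation identity ∇ₙ ∘ Δₘ = (Δₘ + 4·δ_{nm}·id_A) ∘ ∇ₙ holds; that is, ∇ₙ(Δₘ(x)) = Δₘ(∇ₙ(x)) + 4·δ_{nm}·∇ₙ(x) for every x ∈ A. -/

import Mathlib

/-!
With `φ (D m) = -D m` and `D m * D m = 1`, one computes `Δₘ z = 2 (z - D m φ(z) D m)`, so the
claim reduces to commuting the twisted commutator `∇ₙ` past the twisted conjugation
`z ↦ D m φ(z) D m`. The defect of this commutation is built from the anticommutators
`D n D m + D m D n = 2 δₙₘ`, and vanishes unless `n = m`, where it is `-2 ∇ₙ`.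
-/

section TwistedDerivations

variable {A : Type*} [Ring A] [Algebra ℂ A] (φ : A →ₐ[ℂ] A)

def twistedComm (d x : A) : A := d * x - φ x * d

def twistedAnticomm (d x : A) : A := d * x + φ x * d

def twistedConj (d x : A) : A := d * φ x * d

variable {φ}

theorem twistedConj_smul (d : A) (c : ℂ) (x : A) :
    twistedConj φ d (c • x) = c • twistedConj φ d x := by
  simp only [twistedConj, map_smul, mul_smul_comm, smul_mul_assoc]

theorem twistedAnticomm_smul (d : A) (c : ℂ) (x : A) :
    twistedAnticomm φ d (c • x) = c • twistedAnticomm φ d x := by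
  simp only [twistedAnticomm, map_smul, mul_smul_comm, smul_mul_assoc, smul_add]

theorem twistedAnticomm_twistedComm (hφ : ∀ x, φ (φ x) = x) {d : A} (hd : φ d = -d)
    (hdd : d * d = 1) (z : A) :
    twistedAnticomm φ d (twistedComm φ d z) = (2 : ℂ) • (z - twistedConj φ d z) := by
  simp only [twistedAnticomm, twistedComm, twistedConj, map_sub, map_mul, hφ, hd]
  have hleft : d * (d * z) = z := by rw [← mul_assoc, hdd, one_mul]
  have hright : z * -d * d = -z := by rw [mul_neg, neg_mul, mul_assoc, hdd, mul_one]
  simp only [mul_sub, sub_mul, hleft, hright, two_smul]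
  noncomm_ring

theorem twistedComm_twistedConj (hφ : ∀ x, φ (φ x) = x) {d e : A} (hd : φ d = -d)
    (he : φ e = -e) (x : A) :
    twistedComm φ d (twistedConj φ e x) =
      twistedConj φ e (twistedComm φ d x) +
        ((d * e + e * d) * φ x * e - e * x * (e * d + d * e)) := by
  simp only [twistedComm, twistedConj, map_sub, map_mul, hφ, hd, he]
  noncomm_ring

theorem twistedComm_twistedConj_of_anticomm (hφ : ∀ x, φ (φ x) = x) {d e : A}
    (hd : φ d = -d) (he : φ e = -e) {c : ℂ} (hde : d * e + e * d = c • 1) (x : A) :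
    twistedComm φ d (twistedConj φ e x) =
      twistedConj φ e (twistedComm φ d x) + c • (φ x * e - e * x) := by
  rw [twistedComm_twistedConj hφ hd he, add_comm (e * d), hde, smul_sub]
  simp only [smul_mul_assoc, one_mul, mul_smul_comm, mul_one]

end TwistedDerivations

/-- In the setting of the differential dynamics of the `D n`,
with `∇ₙ x = i (D n * x - φ x * D n)`, `∇ₙ† x = -i (D n * x + φ x * D n)` and
`Δₘ = ∇ₘ† ∘ ∇ₘ`, the commutation identity
`∇ₙ ∘ Δₘ = (Δₘ + 4 δ_{nm} id) ∘ ∇ₙ` holds, i.e.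
`∇ₙ (Δₘ x) = Δₘ (∇ₙ x) + 4 δ_{nm} ∇ₙ x` for every `x ∈ A`. -/
theorem stmt_3 {A : Type*} [Ring A] [Algebra ℂ A]
    (φ : A →ₐ[ℂ] A) (hφ : ∀ x, φ (φ x) = x)
    {N : ℕ} (D : Fin N → A)
    (hDneg : ∀ n, φ (D n) = - D n)
    (hDanti : ∀ n m, D n * D m + D m * D n = (if n = m then (2 : ℂ) else 0) • (1 : A))
    (grad : Fin N → A →ₗ[ℂ] A)
    (hgrad : ∀ n x, grad n x = Complex.I • (D n * x - φ x * D n))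
    (gradAdj : Fin N → A →ₗ[ℂ] A)
    (hgradAdj : ∀ n x, gradAdj n x = (-Complex.I) • (D n * x + φ x * D n)) :
    ∀ n m : Fin N, ∀ x : A,
      grad n (gradAdj m (grad m x)) =
        gradAdj m (grad m (grad n x)) + (if n = m then (4 : ℂ) else 0) • grad n x := by
  intro n m x
  have hgrad' : ∀ k, ⇑(grad k) = Complex.I • twistedComm φ (D k) :=
    fun k => funext (hgrad k)
  have hgradAdj' : ∀ k, ⇑(gradAdj k) = (-Complex.I) • twistedAnticomm φ (D k) :=
    fun k => funext (hgradAdj k)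
  have hlaplacian : ∀ z, gradAdj m (grad m z) = (2 : ℂ) • (z - twistedConj φ (D m) z) := by
    intro z
    have hDD : D m * D m = 1 := by
      simpa [← two_smul ℂ (D m * D m)] using hDanti m m
    rw [hgradAdj', hgrad', Pi.smul_apply, Pi.smul_apply, twistedAnticomm_smul, smul_smul,
      neg_mul, Complex.I_mul_I, neg_neg, one_smul, twistedAnticomm_twistedComm hφ (hDneg m) hDD]
  have hconj : grad n (twistedConj φ (D m) x) =
      twistedConj φ (D m) (grad n x) - (if n = m then (2 : ℂ) else 0) • grad n x := by
    simp only [hgrad', Pi.smul_apply, twistedConj_smul,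
      twistedComm_twistedConj_of_anticomm hφ (hDneg n) (hDneg m) (hDanti n m)]
    split_ifs with hnm
    · subst hnm
      simp only [twistedComm]
      module
    · simp
  rw [hlaplacian, hlaplacian, map_smul, map_sub, hconj]
  split_ifs <;> module
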